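/- arXiv:2002.11451 — 2 statements merged into one kernel-verified Lean document; each statement's English description precedes it below -/
import Mathlib

section
/- The function φ(r) = 1/cosh(√r) is completely monotone on (0,∞), with the convention φ(0) = 1 (extended continuously), and lim_{r→0⁺} φ(r) = 1. -/
/-!
With `aₖ = ((2k+1)π/2)²` one has `cosh √r = ∏ₖ (1 + r/aₖ)`, so that
`g := -φ'/φ = tanh √r / (2√r) = ∑ₖ 1/(r + aₖ)`. This partial-fraction expansion of `tanh` is
obtained from that of `cot` at imaginary arguments, via `tanh x = 2 coth 2x - coth x`.
The function `g` is completely monotone, its `n`-th derivative being `(-1)ⁿ n! ∑ₖ (r + aₖ)^-(n+1)`.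
Then `φ' = -g φ` and `φ ≥ 0` give complete monotonicity of `φ` by strong induction: by Leibniz's
rule, `(-1)ⁿ⁺¹ φ⁽ⁿ⁺¹⁾ = ∑ᵢ binom(n,i) ((-1)ⁱ g⁽ⁱ⁾) ((-1)ⁿ⁻ⁱ φ⁽ⁿ⁻ⁱ⁾)` is a sum of nonnegative terms.
-/

open Real Filter Set Topology
open scoped ContDiff Nat

def CompletelyMonotoneOn (f : ℝ → ℝ) (s : Set ℝ) : Prop :=
  ∀ n : ℕ, ∀ x ∈ s, 0 ≤ (-1 : ℝ) ^ n * iteratedDeriv n f x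

section DerivativeChain

variable {s : Set ℝ} {F : ℕ → ℝ → ℝ}

theorem iteratedDeriv_eq_of_hasDerivAt_neg_succ (hs : IsOpen s)
    (hF : ∀ n, ∀ x ∈ s, HasDerivAt (F n) (-F (n + 1) x) x) (n : ℕ) :
    ∀ x ∈ s, iteratedDeriv n (F 0) x = (-1) ^ n * F n x := by
  induction n with
  | zero => simp
  | succ n ih =>
    intro x hx
    have hev : iteratedDeriv n (F 0) =ᶠ[𝓝 x] fun y => (-1) ^ n * F n y :=
      eventually_of_mem (hs.mem_nhds hx) ih
    rw [iteratedDeriv_succ, hev.deriv_eq, ((hF n x hx).const_mul _).deriv, pow_succ]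
    ring

theorem contDiffOn_of_hasDerivAt_neg_succ (hs : IsOpen s)
    (hF : ∀ n, ∀ x ∈ s, HasDerivAt (F n) (-F (n + 1) x) x) (n : ℕ) :
    ContDiffOn ℝ ∞ (F n) s := by
  have hdiff (n : ℕ) : DifferentiableOn ℝ (F n) s := fun x hx =>
    (hF n x hx).differentiableAt.differentiableWithinAt
  refine contDiffOn_infty.mpr fun m => ?_
  induction m generalizing n with
  | zero => exact contDiffOn_zero.mpr (hdiff n).continuousOn
  | succ m ih =>
    rw [Nat.cast_succ, contDiffOn_succ_iff_deriv_of_isOpen hs]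
    refine ⟨hdiff n, by simp, ?_⟩
    exact (ih (n + 1)).neg.congr fun x hx => (hF n x hx).deriv

theorem CompletelyMonotoneOn.of_hasDerivAt_neg_succ (hs : IsOpen s)
    (hF : ∀ n, ∀ x ∈ s, HasDerivAt (F n) (-F (n + 1) x) x) (hF_nonneg : ∀ n, ∀ x ∈ s, 0 ≤ F n x) :
    CompletelyMonotoneOn (F 0) s := fun n x hx => by
  rw [iteratedDeriv_eq_of_hasDerivAt_neg_succ hs hF n x hx, ← mul_assoc, ← pow_add,
    Even.neg_one_pow ⟨n, rfl⟩, one_mul]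
  exact hF_nonneg n x hx

end DerivativeChain

theorem CompletelyMonotoneOn.of_deriv_eq_neg_mul {s : Set ℝ} {f g : ℝ → ℝ} (hs : IsOpen s)
    (hf : ContDiffOn ℝ ∞ f s) (hg : ContDiffOn ℝ ∞ g s) (hf_nonneg : ∀ x ∈ s, 0 ≤ f x)
    (hderiv : ∀ x ∈ s, deriv f x = -(g x * f x)) (hg_cm : CompletelyMonotoneOn g s) :
    CompletelyMonotoneOn f s := by
  intro n
  induction n using Nat.strong_induction_on with
  | _ n ih =>
    rcases n with _ | m
    · simpa using hf_nonneg
    intro x hx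
    have hev : deriv f =ᶠ[𝓝 x] -(g * f) := eventually_of_mem (hs.mem_nhds hx) hderiv
    have hsmooth {h : ℝ → ℝ} (hh : ContDiffOn ℝ ∞ h s) : ContDiffAt ℝ m h x :=
      (hh.contDiffAt (hs.mem_nhds hx)).of_le (by exact_mod_cast le_top)
    rw [iteratedDeriv_succ', hev.iteratedDeriv_eq, iteratedDeriv_neg,
      iteratedDeriv_mul (hsmooth hg) (hsmooth hf), mul_neg, ← neg_mul, Finset.mul_sum]
    refine Finset.sum_nonneg fun i hi => ?_
    have hi : i ≤ m := Nat.lt_succ_iff.mp (Finset.mem_range.mp hi)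
    have hsign : -(-1 : ℝ) ^ (m + 1) = (-1) ^ i * (-1) ^ (m - i) := by
      rw [← pow_add, Nat.add_sub_cancel' hi, pow_succ]
      ring
    calc (0 : ℝ) ≤ m.choose i * ((-1) ^ i * iteratedDeriv i g x) *
          ((-1) ^ (m - i) * iteratedDeriv (m - i) f x) :=
          mul_nonneg (mul_nonneg (Nat.cast_nonneg _) (hg_cm i x hx)) (ih (m - i) (by omega) x hx)
      _ = _ := by rw [hsign]; ring

noncomputable def invPowSum (a : ℕ → ℝ) (n : ℕ) (r : ℝ) : ℝ :=
  n ! * ∑' k, ((r + a k) ^ (n + 1))⁻¹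

theorem hasDerivAt_inv_add_pow_succ (c : ℝ) (n : ℕ) {r : ℝ} (hr : r + c ≠ 0) :
    HasDerivAt (fun y => ((y + c) ^ (n + 1))⁻¹) (-((n + 1) * ((r + c) ^ (n + 2))⁻¹)) r := by
  refine ((((hasDerivAt_id r).add_const c).pow (n + 1)).inv (pow_ne_zero _ hr)).congr_deriv ?_
  simp only [id, Nat.add_sub_cancel, Pi.pow_apply]
  field_simp
  push_cast
  ring

namespace invPowSum

variable {a : ℕ → ℝ}

theorem nonneg (ha : ∀ k, 0 < a k) (n : ℕ) {r : ℝ} (hr : 0 ≤ r) : 0 ≤ invPowSum a n r :=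
  mul_nonneg (Nat.cast_nonneg _) (tsum_nonneg fun k => by have := ha k; positivity)

theorem summable_inv_pow (ha : ∀ k, 0 < a k) (hsum : Summable fun k => (a k)⁻¹) (n : ℕ) :
    Summable fun k => (a k ^ (n + 1))⁻¹ := by
  refine hsum.of_norm_bounded_eventually ?_
  filter_upwards [hsum.tendsto_cofinite_zero.eventually (ge_mem_nhds one_pos)] with k hk
  have hak := ha k
  rw [norm_inv, norm_pow, Real.norm_of_nonneg hak.le, ← inv_pow, pow_succ']
  exact mul_le_of_le_one_right (inv_nonneg.mpr hak.le) (pow_le_one₀ (by positivity) hk)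

theorem summable_inv_add_pow (ha : ∀ k, 0 < a k) (hsum : Summable fun k => (a k)⁻¹) (n : ℕ)
    {r : ℝ} (hr : 0 ≤ r) : Summable fun k => ((r + a k) ^ (n + 1))⁻¹ :=
  (summable_inv_pow ha hsum n).of_nonneg_of_le (fun k => by have := ha k; positivity)
    fun k => inv_anti₀ (pow_pos (ha k) _) (pow_le_pow_left₀ (ha k).le (by linarith) _)

theorem hasDerivAt (ha : ∀ k, 0 < a k) (hsum : Summable fun k => (a k)⁻¹) (n : ℕ) {r : ℝ}
    (hr : 0 < r) : HasDerivAt (invPowSum a n) (-invPowSum a (n + 1) r) r := by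
  have hpos {y : ℝ} (hy : y ∈ Ioi 0) (k : ℕ) : 0 < y + a k := add_pos hy (ha k)
  have hterm := hasDerivAt_tsum_of_isPreconnected
    (u := fun k => (n + 1) * (a k ^ (n + 2))⁻¹) ((summable_inv_pow ha hsum _).mul_left _)
    isOpen_Ioi isPreconnected_Ioi
    (fun k y hy => hasDerivAt_inv_add_pow_succ (a k) n (hpos hy k).ne')
    (fun k y hy => ?_) (mem_Ioi.mpr one_pos) (summable_inv_add_pow ha hsum n zero_le_one) hr
  · refine (hterm.const_mul (n ! : ℝ)).congr_deriv ?_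
    rw [invPowSum, tsum_neg, tsum_mul_left, Nat.factorial_succ]
    push_cast
    ring
  · have := hpos hy k
    rw [norm_neg, norm_mul, Real.norm_of_nonneg (by positivity), Real.norm_of_nonneg (by positivity)]
    exact mul_le_mul_of_nonneg_left (inv_anti₀ (pow_pos (ha k) _)
      (pow_le_pow_left₀ (ha k).le (by linarith [mem_Ioi.mp hy]) _)) (by positivity)

theorem contDiffOn (ha : ∀ k, 0 < a k) (hsum : Summable fun k => (a k)⁻¹) (n : ℕ) :
    ContDiffOn ℝ ∞ (invPowSum a n) (Ioi 0) :=
  contDiffOn_of_hasDerivAt_neg_succ isOpen_Ioi (fun n _ hx => hasDerivAt ha hsum n hx) n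

theorem completelyMonotoneOn (ha : ∀ k, 0 < a k) (hsum : Summable fun k => (a k)⁻¹) :
    CompletelyMonotoneOn (invPowSum a 0) (Ioi 0) :=
  .of_hasDerivAt_neg_succ isOpen_Ioi (fun n _ hx => hasDerivAt ha hsum n hx)
    fun n _ hx => nonneg ha n (le_of_lt hx)

end invPowSum

theorem hasSum_cosh_div_sinh_sub_inv {x : ℝ} (hx : x ≠ 0) :
    HasSum (fun n : ℕ => 2 * x / (x ^ 2 + (π * (n + 1)) ^ 2)) (cosh x / sinh x - 1 / x) := by
  set z : ℂ := x * Complex.I / π with hz_def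
  have hπ : (π : ℂ) ≠ 0 := Complex.ofReal_ne_zero.mpr pi_ne_zero
  have hz : z ∈ Complex.integerComplement := by
    rintro ⟨n, hn⟩
    have := congrArg Complex.im hn
    simp [z] at this
    exact hx ((div_eq_zero_iff.mp this.symm).resolve_right pi_ne_zero)
  have hcot : HasSum (cotTerm z) (π * Complex.cot (π * z) - 1 / z) :=
    cot_series_rep' hz ▸ (summable_cotTerm hz).hasSum
  have hterm (n : ℕ) :
      cotTerm z n = ((2 * x / (x ^ 2 + (π * (n + 1)) ^ 2) : ℝ) : ℂ) * -(π * Complex.I) := by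
    have hd : (x : ℂ) ^ 2 + (π * (n + 1)) ^ 2 ≠ 0 := by
      exact_mod_cast (by positivity : (0:ℝ) < x ^ 2 + (π * (n + 1)) ^ 2).ne'
    have hprod : (z + (n + 1)) * (z - (n + 1)) = -((x : ℂ) ^ 2 + (π * (n + 1)) ^ 2) / π ^ 2 := by
      rw [hz_def]
      field_simp
      ring_nf
      rw [Complex.I_sq]
      ring
    rw [cotTerm_identity hz, hprod, hz_def]
    push_cast
    field_simp
  have hval : π * Complex.cot (π * z) - 1 / z =
      ((cosh x / sinh x - 1 / x : ℝ) : ℂ) * -(π * Complex.I) := by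
    have hs : Complex.sinh x ≠ 0 := by exact_mod_cast (Real.sinh_ne_zero.mpr hx)
    have hx' : (x : ℂ) ≠ 0 := Complex.ofReal_ne_zero.mpr hx
    have hπz : (π : ℂ) * z = x * Complex.I := by rw [hz_def]; field_simp
    rw [hπz, Complex.cot_eq_cos_div_sin, Complex.cos_mul_I, Complex.sin_mul_I, hz_def]
    push_cast
    field_simp
    rw [Complex.I_sq]
    ring
  rw [← Complex.hasSum_ofReal, ← hasSum_mul_right_iff (by simp [hπ] : -(π * Complex.I) ≠ 0)]
  rwa [show cotTerm z = _ from funext hterm, hval] at hcot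

theorem tanh_eq_two_mul_coth_two_mul_sub_coth {x : ℝ} (hx : x ≠ 0) :
    tanh x = 2 * (cosh (2 * x) / sinh (2 * x)) - cosh x / sinh x := by
  have hs : sinh x ≠ 0 := Real.sinh_ne_zero.mpr hx
  have hc : cosh x ≠ 0 := (cosh_pos x).ne'
  rw [tanh_eq_sinh_div_cosh, sinh_two_mul, cosh_two_mul]
  field_simp
  ring

theorem hasSum_tanh {x : ℝ} (hx : x ≠ 0) :
    HasSum (fun k : ℕ => 2 * x / (x ^ 2 + ((2 * k + 1) * π / 2) ^ 2)) (tanh x) := by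
  set f : ℕ → ℝ := fun n => 2 * (2 * x) / ((2 * x) ^ 2 + (π * (n + 1)) ^ 2) with hf
  have h2x : HasSum f _ := hasSum_cosh_div_sinh_sub_inv (mul_ne_zero two_ne_zero hx)
  have hodd : HasSum (fun k => f (2 * k + 1)) ((cosh x / sinh x - 1 / x) / 2) := by
    refine ((hasSum_cosh_div_sinh_sub_inv hx).div_const 2).congr_fun fun k => ?_
    simp only [hf]
    push_cast
    field_simp
    ring
  obtain ⟨e, heven⟩ : Summable fun k => f (2 * k) :=
    h2x.summable.comp_injective (mul_right_injective₀ (two_ne_zero' ℕ))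
  have hsplit := (heven.even_add_odd hodd).unique h2x
  have htanh : tanh x = 2 * e := by
    rw [tanh_eq_two_mul_coth_two_mul_sub_coth hx, eq_sub_of_add_eq hsplit]
    field_simp
    ring
  rw [htanh]
  refine (heven.mul_left 2).congr_fun fun k => ?_
  simp only [hf]
  push_cast
  field_simp

noncomputable def cosZeroSq (k : ℕ) : ℝ := ((2 * k + 1) * π / 2) ^ 2

theorem cosZeroSq_pos (k : ℕ) : 0 < cosZeroSq k := by
  unfold cosZeroSq
  positivity

theorem summable_inv_cosZeroSq : Summable fun k => (cosZeroSq k)⁻¹ := by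
  have h : Summable fun k : ℕ => (((k + 1 : ℕ) : ℝ) ^ 2)⁻¹ :=
    (summable_nat_add_iff 1).mpr (Real.summable_nat_pow_inv.mpr one_lt_two)
  refine h.of_nonneg_of_le (fun k => (inv_pos.mpr (cosZeroSq_pos k)).le) fun k =>
    inv_anti₀ (by positivity) (pow_le_pow_left₀ (by positivity) ?_ 2)
  push_cast
  nlinarith [pi_gt_three]

theorem tanh_sqrt_div_eq_invPowSum {r : ℝ} (hr : 0 < r) :
    tanh √r / (2 * √r) = invPowSum cosZeroSq 0 r := by
  have hs : 0 < √r := sqrt_pos.mpr hr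
  rw [invPowSum, ← ((hasSum_tanh hs.ne').div_const (2 * √r)).tsum_eq]
  simp only [Nat.factorial_zero, Nat.cast_one, one_mul, zero_add, pow_one]
  congr 1
  funext k
  rw [sq_sqrt hr.le, cosZeroSq]
  field_simp

theorem hasDerivAt_inv_cosh_sqrt {r : ℝ} (hr : 0 < r) :
    HasDerivAt (fun r => (cosh √r)⁻¹) (-(tanh √r / (2 * √r) * (cosh √r)⁻¹)) r := by
  refine (((hasDerivAt_cosh _).comp r (hasDerivAt_sqrt hr.ne')).inv (cosh_pos _).ne').congr_deriv ?_
  rw [tanh_eq_sinh_div_cosh, Function.comp_apply]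
  field_simp

theorem contDiffOn_inv_cosh_sqrt : ContDiffOn ℝ ∞ (fun r => (cosh √r)⁻¹) (Ioi 0) := fun r hr =>
  (contDiff_cosh.contDiffAt.comp r (contDiffAt_sqrt (ne_of_gt hr))).inv
    (cosh_pos _).ne' |>.contDiffWithinAt

/-- `φ(r) = 1/cosh(√r)` is completely monotone on `(0,∞)` and tends to `1`
as `r → 0⁺` (and `φ(0) = 1`). -/
theorem cosh_sqrt_inv_completely_monotone :
    (∀ k : ℕ, ∀ r : ℝ, 0 < r →
      0 ≤ (-1 : ℝ) ^ k *
        iteratedDeriv k (fun r => (Real.cosh (Real.sqrt r))⁻¹) r) ∧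
    (Real.cosh (Real.sqrt 0))⁻¹ = 1 ∧
    Filter.Tendsto (fun r => (Real.cosh (Real.sqrt r))⁻¹)
      (nhdsWithin 0 (Set.Ioi 0)) (nhds 1) := by
  refine ⟨?_, by simp, ?_⟩
  · have hcm := invPowSum.completelyMonotoneOn cosZeroSq_pos summable_inv_cosZeroSq
    refine CompletelyMonotoneOn.of_deriv_eq_neg_mul isOpen_Ioi contDiffOn_inv_cosh_sqrt
      (invPowSum.contDiffOn cosZeroSq_pos summable_inv_cosZeroSq 0) (fun r _ => by positivity)
      (fun r hr => ?_) hcm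
    rw [(hasDerivAt_inv_cosh_sqrt hr).deriv, tanh_sqrt_div_eq_invPowSum hr]
  · have hcont : Continuous fun r => (cosh √r)⁻¹ :=
      (continuous_cosh.comp continuous_sqrt).inv₀ fun r => (cosh_pos _).ne'
    simpa using (hcont.tendsto 0).mono_left nhdsWithin_le_nhds
end

section
/- The function φ(r) = (1 + √(3r)/ρ) e^{-√(3r)/ρ} (the Matern-3/2 profile) satisfies lim_{r→0⁺} φ(r) = 1 and is completely monotone on (0,∞). -/
/-!
With `c = √3 / ρ` the profile is `φ(r) = (1 + c√r) e^{-c√r}`, and `φ'(r) = -(c²/2) e^{-c√r}`.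
Differentiating `a x^{-n/2} e^{-c√x}` gives minus the sum of `(a n / 2) x^{-(n+2)/2} e^{-c√x}` and
`(a c / 2) x^{-(n+1)/2} e^{-c√x}`, so the cone of nonnegative combinations of the functions
`x^{-n/2} e^{-c√x}` is mapped into itself by `f ↦ -f'`. Its members are nonnegative on `(0, ∞)`,
hence all derivatives of `φ` alternate in sign there.
-/

open Real Set Filter Topology

section ClosedUnderNegDeriv

variable {s : Set ℝ} {P : (ℝ → ℝ) → Prop}

theorem exists_eqOn_iteratedDeriv_succ_of_closed_under_neg_deriv (hs : IsOpen s)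
    (hP : ∀ g, P g → ∃ h, P h ∧ ∀ x ∈ s, HasDerivAt g (-h x) x)
    {f g : ℝ → ℝ} (hg : P g) (hf : ∀ x ∈ s, HasDerivAt f (-g x) x) (k : ℕ) :
    ∃ h, P h ∧ EqOn (iteratedDeriv (k + 1) f) (fun x => (-1) ^ (k + 1) * h x) s := by
  induction k with
  | zero => exact ⟨g, hg, fun x hx => by simp [(hf x hx).deriv]⟩
  | succ k ih =>
    obtain ⟨h, hh, heq⟩ := ih
    obtain ⟨h', hh', hderiv⟩ := hP h hh
    refine ⟨h', hh', fun x hx => ?_⟩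
    have hev : iteratedDeriv (k + 1) f =ᶠ[𝓝 x] fun y => (-1) ^ (k + 1) * h y :=
      eventually_of_mem (hs.mem_nhds hx) heq
    rw [iteratedDeriv_succ, hev.deriv_eq, ((hderiv x hx).const_mul _).deriv]
    ring

theorem neg_one_pow_mul_iteratedDeriv_nonneg_of_closed_under_neg_deriv (hs : IsOpen s)
    (hP : ∀ g, P g → ∃ h, P h ∧ ∀ x ∈ s, HasDerivAt g (-h x) x)
    (hP_nonneg : ∀ g, P g → ∀ x ∈ s, 0 ≤ g x)
    {f g : ℝ → ℝ} (hg : P g) (hf : ∀ x ∈ s, HasDerivAt f (-g x) x)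
    (hf_nonneg : ∀ x ∈ s, 0 ≤ f x) (k : ℕ) {x : ℝ} (hx : x ∈ s) :
    0 ≤ (-1) ^ k * iteratedDeriv k f x := by
  cases k with
  | zero => simpa using hf_nonneg x hx
  | succ k =>
    obtain ⟨h, hh, heq⟩ := exists_eqOn_iteratedDeriv_succ_of_closed_under_neg_deriv hs hP hg hf k
    rw [heq hx, ← mul_assoc, ← pow_add, ← two_mul, pow_mul, neg_one_sq, one_pow, one_mul]
    exact hP_nonneg h hh x hx

end ClosedUnderNegDeriv

inductive SqrtExpSum (c : ℝ) : (ℝ → ℝ) → Prop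
  | term (a : ℝ) (n : ℕ) (ha : 0 ≤ a) :
      SqrtExpSum c fun x => a * x ^ (-(n : ℝ) / 2) * exp (-(c * √x))
  | add {f g : ℝ → ℝ} : SqrtExpSum c f → SqrtExpSum c g → SqrtExpSum c (f + g)

theorem hasDerivAt_exp_neg_mul_sqrt (c : ℝ) {x : ℝ} (hx : 0 < x) :
    HasDerivAt (fun y => exp (-(c * √y))) (exp (-(c * √x)) * -(c * (1 / (2 * √x)))) x :=
  (((hasDerivAt_sqrt hx.ne').const_mul c).neg).exp

theorem hasDerivAt_rpow_mul_exp_neg_mul_sqrt (c a : ℝ) (n : ℕ) {x : ℝ} (hx : 0 < x) :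
    HasDerivAt (fun y => a * y ^ (-(n : ℝ) / 2) * exp (-(c * √y)))
      (-(a * n / 2 * x ^ (-((n + 2 : ℕ) : ℝ) / 2) * exp (-(c * √x))
        + a * c / 2 * x ^ (-((n + 1 : ℕ) : ℝ) / 2) * exp (-(c * √x)))) x := by
  have hpow : HasDerivAt (fun y : ℝ => y ^ (-(n : ℝ) / 2))
      (-(n : ℝ) / 2 * x ^ (-(n : ℝ) / 2 - 1)) x :=
    hasDerivAt_rpow_const (Or.inl hx.ne')
  refine ((hpow.const_mul a).mul (hasDerivAt_exp_neg_mul_sqrt c hx)).congr_deriv ?_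
  have hsqrt : √x ≠ 0 := (sqrt_pos.mpr hx).ne'
  have hpow_two : x ^ (-((n + 2 : ℕ) : ℝ) / 2) = x ^ (-(n : ℝ) / 2 - 1) := by
    congr 1; push_cast; ring
  have hpow_one : x ^ (-((n + 1 : ℕ) : ℝ) / 2) = x ^ (-(n : ℝ) / 2) * (√x)⁻¹ := by
    rw [sqrt_eq_rpow, ← rpow_neg hx.le, ← rpow_add hx]
    congr 1; push_cast; ring
  rw [hpow_two, hpow_one]
  field_simp
  ring

namespace SqrtExpSum

variable {c : ℝ} {f : ℝ → ℝ}

theorem nonneg (hf : SqrtExpSum c f) {x : ℝ} (hx : 0 < x) : 0 ≤ f x := by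
  induction hf with
  | term a n ha => have := rpow_pos_of_pos hx (-(n : ℝ) / 2); positivity
  | add _ _ ihf ihg => exact add_nonneg ihf ihg

theorem exists_hasDerivAt_neg (hc : 0 ≤ c) (hf : SqrtExpSum c f) :
    ∃ g, SqrtExpSum c g ∧ ∀ x ∈ Ioi 0, HasDerivAt f (-g x) x := by
  induction hf with
  | term a n ha =>
    exact ⟨_, (term (a * n / 2) (n + 2) (by positivity)).add (term (a * c / 2) (n + 1)
      (by positivity)), fun x hx => hasDerivAt_rpow_mul_exp_neg_mul_sqrt c a n hx⟩
  | add _ _ ihf ihg =>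
    obtain ⟨f', hf', hderivf⟩ := ihf
    obtain ⟨g', hg', hderivg⟩ := ihg
    refine ⟨f' + g', hf'.add hg', fun x hx => ?_⟩
    simpa only [Pi.add_apply, neg_add] using (hderivf x hx).add (hderivg x hx)

end SqrtExpSum

theorem hasDerivAt_one_add_mul_sqrt_mul_exp (c : ℝ) {x : ℝ} (hx : 0 < x) :
    HasDerivAt (fun y => (1 + c * √y) * exp (-(c * √y))) (-(c ^ 2 / 2 * exp (-(c * √x)))) x := by
  have hlin : HasDerivAt (fun y => 1 + c * √y) (c * (1 / (2 * √x))) x :=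
    ((hasDerivAt_sqrt hx.ne').const_mul c).const_add 1
  refine (hlin.mul (hasDerivAt_exp_neg_mul_sqrt c hx)).congr_deriv ?_
  have hsqrt : √x ≠ 0 := (sqrt_pos.mpr hx).ne'
  field_simp
  ring

/-- The Matern-3/2 profile `φ(r) = (1 + √(3r)/ρ) e^{-√(3r)/ρ}` tends to `1` as
`r → 0⁺` and is completely monotone on `(0,∞)`. -/
theorem matern32_profile_completely_monotone (ρ : ℝ) (hρ : 0 < ρ) :
    Filter.Tendsto
      (fun r => (1 + Real.sqrt (3 * r) / ρ) * Real.exp (-Real.sqrt (3 * r) / ρ))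
      (nhdsWithin 0 (Set.Ioi 0)) (nhds 1) ∧
    (∀ k : ℕ, ∀ r : ℝ, 0 < r →
      0 ≤ (-1 : ℝ) ^ k *
        iteratedDeriv k
          (fun r => (1 + Real.sqrt (3 * r) / ρ) * Real.exp (-Real.sqrt (3 * r) / ρ))
          r) := by
  set c := √3 / ρ with hc_def
  have hc : 0 ≤ c := by positivity
  have hprofile : (fun r => (1 + √(3 * r) / ρ) * exp (-√(3 * r) / ρ))
      = fun r => (1 + c * √r) * exp (-(c * √r)) := by
    funext r
    rw [sqrt_mul (by norm_num : (0 : ℝ) ≤ 3), hc_def, div_mul_eq_mul_div, neg_div]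
  rw [hprofile]
  constructor
  · have hcont : Continuous fun r => (1 + c * √r) * exp (-(c * √r)) := by fun_prop
    simpa using (hcont.tendsto 0).mono_left nhdsWithin_le_nhds
  · have hneg_deriv : SqrtExpSum c fun x => c ^ 2 / 2 * exp (-(c * √x)) := by
      simpa using SqrtExpSum.term (c := c) (c ^ 2 / 2) 0 (by positivity)
    intro k r hr
    exact neg_one_pow_mul_iteratedDeriv_nonneg_of_closed_under_neg_deriv isOpen_Ioi
      (fun _ hg => hg.exists_hasDerivAt_neg hc) (fun _ hg _ hx => hg.nonneg hx) hneg_deriv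
      (fun x hx => hasDerivAt_one_add_mul_sqrt_mul_exp c hx) (fun x _ => by positivity) k hr
end
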